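/- arXiv:2205.08276 — 4 statements merged into one kernel-verified Lean document; each statement's English description precedes it below -/
import Mathlib

section
/- If V is a basic computability model, then an analog of the s-m-n theorem holds: for all m, n there exists a V-function s of arity m+1 such that for all natural numbers k₁,…,k_m and every e ∈ I_{m+n}, s(e,k₁,…,k_m) ∈ Iₙ and φ_{s(e,k₁,…,k_m)}(x₁,…,xₙ) ≃ φ_e(x₁,…,xₙ,k₁,…,k_m). -/
namespace GenReal

/-- An `n`-ary partial number-theoretic function. -/
abbrev PFn (n : ℕ) := (Fin n → ℕ) → Part ℕ

/-- Combine a vector of partial values into a partial vector of values. -/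
def vecPart {n : ℕ} (f : Fin n → Part ℕ) : Part (Fin n → ℕ) :=
  ⟨∀ i, (f i).Dom, fun h i => (f i).get (h i)⟩

/-- A set `V` of partial number-theoretic functions presented by a numbering:
a pairing bijection `c` with unpairing functions `p1`, `p2`, index sets `Idx n ⊆ ℕ`
and for each arity `n` a numbering `e ↦ φ n e` of the `n`-ary `V`-functions. -/
structure Numbering where
  c : ℕ → ℕ → ℕ
  p1 : ℕ → ℕ
  p2 : ℕ → ℕ
  cBij : Function.Bijective fun p : ℕ × ℕ => c p.1 p.2
  p1c : ∀ a b, p1 (c a b) = a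
  p2c : ∀ a b, p2 (c a b) = b
  Idx : ℕ → Set ℕ
  φ : (n : ℕ) → ℕ → PFn n

namespace Numbering

variable (V : Numbering)

/-- `p` is an `n`-ary `V`-function, i.e. it has an index. -/
def IsV (n : ℕ) (p : PFn n) : Prop := ∃ e ∈ V.Idx n, ∀ x, V.φ n e x = p x

/-- (BF): projections, the pairing `c` and the unpairings `p1`, `p2` are `V`-functions. -/
def BF : Prop :=
  (∀ (n : ℕ) (i : Fin n), V.IsV n fun x => Part.some (x i)) ∧
  (V.IsV 2 fun x => Part.some (V.c (x 0) (x 1))) ∧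
  (V.IsV 1 fun x => Part.some (V.p1 (x 0))) ∧
  (V.IsV 1 fun x => Part.some (V.p2 (x 0)))

/-- (Cm): composition of `V`-functions is a `V`-function, with an index obtainable
by a `V`-function. -/
def Cm : Prop :=
  ∀ (n : ℕ) (m : Fin n → ℕ),
    ∃ s : PFn (n + 1), V.IsV (n + 1) s ∧
      ∀ e ∈ V.Idx n, ∀ es : Fin n → ℕ, (∀ i, es i ∈ V.Idx (m i)) →
        ∃ v, s (Fin.cons e es) = Part.some v ∧ v ∈ V.Idx (Finset.univ.sup m) ∧
          ∀ x : Fin (Finset.univ.sup m) → ℕ,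
            V.φ (Finset.univ.sup m) v x =
              (vecPart fun i => V.φ (m i) (es i)
                  fun j => x (Fin.castLE (Finset.le_sup (Finset.mem_univ i)) j)).bind
                (V.φ n e)

/-- (Cn): every constant (0-ary) function is a `V`-function with an index obtainable
by a `V`-function. -/
def Cn : Prop :=
  ∃ s : PFn 1, V.IsV 1 s ∧
    ∀ k : ℕ, ∃ v, s ![k] = Part.some v ∧ v ∈ V.Idx 0 ∧
      ∀ x : Fin 0 → ℕ, V.φ 0 v x = Part.some k

/-- (Cs): an index of a "conditional function" (case distinction on whether the last
argument is zero) can be obtained by a `V`-function. -/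
def Cs : Prop :=
  ∀ n : ℕ, ∃ s : PFn 2, V.IsV 2 s ∧
    ∀ e₁ ∈ V.Idx n, ∀ e₂ ∈ V.Idx n,
      ∃ v, s ![e₁, e₂] = Part.some v ∧ v ∈ V.Idx (n + 1) ∧
        ∀ x : Fin (n + 1) → ℕ,
          V.φ (n + 1) v x =
            if x (Fin.last n) = 0 then V.φ n e₁ (Fin.init x) else V.φ n e₂ (Fin.init x)

/-- `V` is a basic computability model. -/
def Basic : Prop := V.BF ∧ V.Cm ∧ V.Cn ∧ V.Cs

/-- `u` is overuniversal for the set of all `n`-ary `V`-functions. -/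
def Overuniversal (n : ℕ) (u : PFn (n + 1)) : Prop :=
  ∀ e ∈ V.Idx n, ∀ a : Fin n → ℕ, (V.φ n e a).Dom → u (Fin.cons e a) = V.φ n e a

/-- (U): there is an overuniversal `V`-function for the set of all unary `V`-functions. -/
def U : Prop := ∃ u : PFn 2, V.IsV 2 u ∧ V.Overuniversal 1 u

/-- `V` is an intuitionistic computability model. -/
def Intu : Prop := V.Basic ∧ V.U

end Numbering

end GenReal

namespace GenReal
namespace Numbering

lemma vecPart_some {n : ℕ} (g : Fin n → ℕ) :
    vecPart (fun i => Part.some (g i)) = Part.some g :=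
  Part.ext' (by simp [vecPart]) (fun _ _ => rfl)

lemma castLE_arg {N : ℕ} (x : Fin N → ℕ) (h : N ≤ N) :
    (fun j => x (Fin.castLE h j)) = x :=
  funext fun j => congrArg x (Fin.ext (by simp))

lemma cm_apply (V : Numbering) (hCm : V.Cm) {n N : ℕ} (m : Fin n → ℕ)
    (hsup : Finset.univ.sup m = N) :
    ∃ s : PFn (n + 1), V.IsV (n + 1) s ∧
      ∀ e ∈ V.Idx n, ∀ es : Fin n → ℕ, (∀ i, es i ∈ V.Idx (m i)) →
        ∃ v, s (Fin.cons e es) = Part.some v ∧ v ∈ V.Idx N ∧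
          ∀ x : Fin N → ℕ,
            V.φ N v x =
              (vecPart fun i => V.φ (m i) (es i)
                  fun j => x (Fin.castLE (hsup ▸ Finset.le_sup (Finset.mem_univ i)) j)).bind
                (V.φ n e) := by
  subst hsup
  exact hCm n m




/-- Every constant function of any arity has an index. -/
lemma constIdx (V : Numbering) (hV : V.Basic) :
    ∀ N k, ∃ v ∈ V.Idx N, ∀ x : Fin N → ℕ, V.φ N v x = Part.some k := by
  intro N k
  obtain ⟨hBF, hCm, hCn, _⟩ := hV
  match N with
  | 0 =>
    obtain ⟨s, _, hs⟩ := hCn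
    obtain ⟨v, _, hvI, hvφ⟩ := hs k
    exact ⟨v, hvI, hvφ⟩
  | N + 1 =>
    obtain ⟨p0, hp0I, hp0⟩ := hBF.1 (N+1) 0
    obtain ⟨pe, hpeI, hpe⟩ := hBF.1 2 1
    obtain ⟨s0, _, hs0⟩ := hCn
    obtain ⟨v0, _, hv0I, hv0⟩ := hs0 k
    set m2 : Fin 2 → ℕ := Fin.cons (N+1) (fun _ => 0) with hm2
    have hsup2 : Finset.univ.sup m2 = N + 1 := by
      refine le_antisymm (Finset.sup_le fun i _ => ?_) (Finset.le_sup (f := m2) (Finset.mem_univ (0 : Fin 2)))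
      induction i using Fin.cases <;> simp [hm2]
    obtain ⟨sP, _, hsP⟩ := cm_apply V hCm m2 hsup2
    obtain ⟨v, hveq, hvI, hvφ⟩ := hsP pe hpeI (Fin.cons p0 (fun _ => v0) : Fin 2 → ℕ)
      (fun i => by induction i using Fin.cases <;> simpa [hm2])
    refine ⟨v, hvI, fun x => ?_⟩
    rw [hvφ x]
    have hvec : (fun i : Fin 2 => V.φ (m2 i) ((Fin.cons p0 (fun _ => v0) : Fin 2 → ℕ) i)
        fun j => x (Fin.castLE (hsup2 ▸ Finset.le_sup (Finset.mem_univ i)) j))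
        = fun i => Part.some ((Fin.cons (x 0) (fun _ => k) : Fin 2 → ℕ) i) := by
      funext i
      induction i using Fin.cases with
      | zero =>
        show V.φ (N+1) p0 _ = Part.some (x 0)
        exact hp0 _
      | succ j =>
        show V.φ 0 v0 _ = Part.some k
        exact hv0 _
    rw [hvec, vecPart_some, Part.bind_some, hpe]
    rfl

/-- Effective n-ary constants: a unary V-function mapping k to an index of the
n-ary constant function with value k. -/
lemma cnAt (V : Numbering) (hV : V.Basic) (n : ℕ) :
    ∃ sc : PFn 1, V.IsV 1 sc ∧ ∀ k, ∃ v, sc ![k] = Part.some v ∧ v ∈ V.Idx n ∧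
      ∀ x : Fin n → ℕ, V.φ n v x = Part.some k := by
  have hBasic : V.Basic := hV
  obtain ⟨hBF, hCm, hCn, hCs⟩ := hV
  match n with
  | 0 => exact hCn
  | N + 1 =>
    obtain ⟨p0, hp0I, hp0⟩ := hBF.1 (N+1) 0
    obtain ⟨pe, hpeI, hpe⟩ := hBF.1 2 1
    obtain ⟨s0, ⟨ecn, hecnI, hecn⟩, hs0⟩ := hCn
    set m2 : Fin 2 → ℕ := Fin.cons (N+1) (fun _ => 0) with hm2
    have hsup2 : Finset.univ.sup m2 = N + 1 := by
      refine le_antisymm (Finset.sup_le fun i _ => ?_)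
        (Finset.le_sup (f := m2) (Finset.mem_univ (0 : Fin 2)))
      induction i using Fin.cases <;> simp [hm2]
    obtain ⟨sP, ⟨eP, hePI, heP⟩, hsP⟩ := cm_apply V hCm m2 hsup2
    obtain ⟨cpe, hcpeI, hcpe⟩ := constIdx V hBasic 1 pe
    obtain ⟨cp0, hcp0I, hcp0⟩ := constIdx V hBasic 1 p0
    have hsup3 : Finset.univ.sup (fun _ : Fin 3 => 1) = 1 :=
      Finset.sup_const Finset.univ_nonempty 1
    obtain ⟨sO, _, hsO⟩ := cm_apply V hCm (fun _ : Fin 3 => 1) hsup3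
    obtain ⟨w, hweq, hwI, hwφ⟩ := hsO eP hePI
      (Fin.cons cpe (Fin.cons cp0 (fun _ => ecn)) : Fin 3 → ℕ)
      (fun i => by
        induction i using Fin.cases with
        | zero => exact hcpeI
        | succ j => induction j using Fin.cases with
          | zero => exact hcp0I
          | succ t => exact hecnI)
    refine ⟨V.φ 1 w, ⟨w, hwI, fun _ => rfl⟩, fun k => ?_⟩
    obtain ⟨v0, hv0eq, hv0I, hv0⟩ := hs0 k
    obtain ⟨v, hveq, hvI, hvφ⟩ := hsP pe hpeI (Fin.cons p0 (fun _ => v0) : Fin 2 → ℕ)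
      (fun i => by induction i using Fin.cases <;> simpa [hm2])
    refine ⟨v, ?_, hvI, fun x => ?_⟩
    · rw [hwφ ![k]]
      have hvec : (fun i : Fin 3 =>
          V.φ 1 ((Fin.cons cpe (Fin.cons cp0 (fun _ => ecn)) : Fin 3 → ℕ) i)
            fun j => (![k] : Fin 1 → ℕ) (Fin.castLE (le_refl 1) j))
          = fun i => Part.some ((Fin.cons pe (Fin.cons p0 (fun _ => v0)) : Fin 3 → ℕ) i) := by
        funext i
        induction i using Fin.cases with
        | zero => exact hcpe _
        | succ j => induction j using Fin.cases with
          | zero => exact hcp0 _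
          | succ t =>
            show V.φ 1 ecn _ = Part.some v0
            rw [hecn, castLE_arg]
            exact hv0eq
      rw [hvec, vecPart_some, Part.bind_some, heP]
      exact hveq
    · rw [hvφ x]
      have hvec2 : (fun i : Fin 2 =>
          V.φ (m2 i) ((Fin.cons p0 (fun _ => v0) : Fin 2 → ℕ) i)
            fun j => x (Fin.castLE (hsup2 ▸ Finset.le_sup (Finset.mem_univ i)) j))
          = fun i => Part.some ((Fin.cons (x 0) (fun _ => k) : Fin 2 → ℕ) i) := by
        funext i
        induction i using Fin.cases with
        | zero =>
          show V.φ (N+1) p0 _ = Part.some (x 0)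
          exact hp0 _
        | succ j =>
          show V.φ 0 v0 _ = Part.some k
          exact hv0 _
      rw [hvec2, vecPart_some, Part.bind_some, hpe]
      rfl

end Numbering
end GenReal


namespace GenReal

open Numbering

/-- SMN: in a basic computability model, an analog of the s-m-n
theorem holds. -/
theorem stmt4 (V : Numbering) (hV : V.Basic) :
    ∀ m n : ℕ, ∃ s : PFn (m + 1), V.IsV (m + 1) s ∧
      ∀ (ks : Fin m → ℕ), ∀ e ∈ V.Idx (n + m),
        ∃ v, s (Fin.cons e ks) = Part.some v ∧ v ∈ V.Idx n ∧
          ∀ x : Fin n → ℕ, V.φ n v x = V.φ (n + m) e (Fin.append x ks) := by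
  intro m n
  have hBF := hV.1
  have hCm := hV.2.1
  -- effective n-ary constants
  obtain ⟨sc, ⟨ec, hecI, hec⟩, hsc⟩ := cnAt V hV n
  -- projection indices of arity n
  choose pidx hpI hpφ using fun t : Fin n => hBF.1 n t
  -- inner composition
  have hsupIn : Finset.univ.sup (fun _ : Fin (n + m) => n) = n := by
    rcases Nat.eq_zero_or_pos (n + m) with h | h
    · obtain ⟨hn, hm⟩ : n = 0 ∧ m = 0 := by omega
      subst hn; subst hm
      simp
    · have : Nonempty (Fin (n + m)) := ⟨⟨0, h⟩⟩
      exact Finset.sup_const Finset.univ_nonempty n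
  obtain ⟨sIn, ⟨eIn, heInI, heIn⟩, hsIn⟩ :=
    cm_apply V hCm (fun _ : Fin (n + m) => n) hsupIn
  -- projection indices of arity m+1
  obtain ⟨pr0, hpr0I, hpr0⟩ := hBF.1 (m + 1) 0
  choose pr hprI hprφ using fun j : Fin m => hBF.1 (m + 1) j.succ
  -- (m+1)-ary constants with values pidx t
  choose cp hcpI hcpφ using fun t : Fin n => constIdx V hV (m + 1) (pidx t)
  -- indices for sc ∘ proj_{j.succ}
  have hsup1 : Finset.univ.sup (fun _ : Fin 1 => m + 1) = m + 1 :=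
    Finset.sup_const Finset.univ_nonempty _
  obtain ⟨sC, _, hsC⟩ := cm_apply V hCm (fun _ : Fin 1 => m + 1) hsup1
  have hw : ∀ j : Fin m, ∃ wj, wj ∈ V.Idx (m + 1) ∧ ∀ z : Fin (m + 1) → ℕ,
      V.φ (m + 1) wj z = sc ![z j.succ] := by
    intro j
    obtain ⟨wj, hweq, hwI, hwφ⟩ := hsC ec hecI (fun _ : Fin 1 => pr j) (fun _ => hprI j)
    refine ⟨wj, hwI, fun z => ?_⟩
    rw [hwφ z]
    have h1 : (fun i : Fin 1 => V.φ (m + 1) ((fun _ : Fin 1 => pr j) i)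
        fun t => z (Fin.castLE (le_refl (m + 1)) t))
        = fun i : Fin 1 => Part.some ((fun _ : Fin 1 => z j.succ) i) := by
      funext i
      rw [castLE_arg, hprφ]
    rw [h1, vecPart_some, Part.bind_some, hec]
    congr 1
    funext t
    simp [Matrix.cons_val_fin_one]
  choose w hwI hwφ using hw
  -- outer composition
  have hsupOut : Finset.univ.sup (fun _ : Fin (n + m + 1) => m + 1) = m + 1 :=
    Finset.sup_const Finset.univ_nonempty _
  obtain ⟨sOut, _, hsOut⟩ := cm_apply V hCm (fun _ : Fin (n + m + 1) => m + 1) hsupOut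
  set gs : Fin (n + m) → ℕ := fun i =>
    if h : (i : ℕ) < n then cp ⟨i, h⟩
    else w ⟨(i : ℕ) - n, by have := i.isLt; omega⟩ with hgs
  obtain ⟨S, hSeq, hSI, hSφ⟩ := hsOut eIn heInI (Fin.cons pr0 gs : Fin (n + m + 1) → ℕ)
    (fun i => by
      induction i using Fin.cases with
      | zero => exact hpr0I
      | succ i =>
        show gs i ∈ _
        by_cases h : (i : ℕ) < n
        · simp only [hgs, dif_pos h]; exact hcpI _
        · simp only [hgs, dif_neg h]; exact hwI _)
  refine ⟨V.φ (m + 1) S, ⟨S, hSI, fun _ => rfl⟩, fun ks e heI => ?_⟩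
  choose vc hvceq hvcI hvcφ using fun j : Fin m => hsc (ks j)
  set esIn : Fin (n + m) → ℕ := fun i =>
    if h : (i : ℕ) < n then pidx ⟨i, h⟩
    else vc ⟨(i : ℕ) - n, by have := i.isLt; omega⟩ with hesIn
  obtain ⟨v, hveq, hvI, hvφ⟩ := hsIn e heI esIn (fun i => by
    by_cases h : (i : ℕ) < n
    · simp only [hesIn, dif_pos h]; exact hpI _
    · simp only [hesIn, dif_neg h]; exact hvcI _)
  refine ⟨v, ?_, hvI, fun x => ?_⟩
  · rw [hSφ (Fin.cons e ks)]
    have hvec : (fun i : Fin (n + m + 1) =>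
        V.φ (m + 1) ((Fin.cons pr0 gs : Fin (n + m + 1) → ℕ) i)
          fun j => (Fin.cons e ks : Fin (m + 1) → ℕ) (Fin.castLE (le_refl (m + 1)) j))
        = fun i => Part.some ((Fin.cons e esIn : Fin (n + m + 1) → ℕ) i) := by
      funext i
      rw [castLE_arg]
      induction i using Fin.cases with
      | zero =>
        show V.φ (m + 1) pr0 _ = Part.some e
        rw [hpr0]
        rfl
      | succ i =>
        show V.φ (m + 1) (gs i) _ = Part.some (esIn i)
        by_cases h : (i : ℕ) < n
        · simp only [hgs, hesIn, dif_pos h]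
          rw [hcpφ]
        · simp only [hgs, hesIn, dif_neg h]
          rw [hwφ]
          simp only [Fin.cons_succ]
          exact hvceq _
    rw [hvec, vecPart_some, Part.bind_some, heIn]
    exact hveq
  · rw [hvφ x]
    have hvec2 : (fun i : Fin (n + m) =>
        V.φ n (esIn i) fun j => x (Fin.castLE (le_refl n) j))
        = fun i => Part.some (Fin.append x ks i) := by
      funext i
      rw [castLE_arg]
      induction i using Fin.addCases with
      | left j =>
        have h : ((Fin.castAdd m j : Fin (n + m)) : ℕ) < n := by simp [j.isLt]
        simp only [hesIn, dif_pos h]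
        rw [hpφ, Fin.append_left]
        rfl
      | right j =>
        have h : ¬ ((Fin.natAdd n j : Fin (n + m)) : ℕ) < n := by simp
        simp only [hesIn, dif_neg h]
        rw [hvcφ, Fin.append_right]
        congr 2
        exact Fin.ext (by simp)
    rw [hvec2, vecPart_some, Part.bind_some]


end GenReal
end

section
/- Let V be an intuitionistic computability model and f an evaluation with domain M. Then the realizability of the axiom K is uniform: there exists a natural number e ∈ I₁ such that for all M-sentences A, B interpreted by f, e realizes A → (B → A); concretely, there is a V-function s with s(a) ∈ I₁ and φ_{s(a)}(y) ≃ a for all a, and an index e of s realizes A → (B → A). -/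
namespace GenReal

/-- Formulas of the language of IPC (predicate symbols of every arity indexed by
naturals; terms are variables, indexed by naturals). -/
inductive Fml where
  | bot : Fml
  | top : Fml
  | pred (P : ℕ) (n : ℕ) (ts : Fin n → ℕ) : Fml
  | and (A B : Fml) : Fml
  | or (A B : Fml) : Fml
  | imp (A B : Fml) : Fml
  | all (x : ℕ) (A : Fml) : Fml
  | ex (x : ℕ) (A : Fml) : Fml

namespace Fml

/-- Size of a formula (used as fuel for the realizability recursion). -/
def size : Fml → ℕ
  | bot => 1
  | top => 1
  | pred _ _ _ => 1
  | and A B => A.size + B.size + 1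
  | or A B => A.size + B.size + 1
  | imp A B => A.size + B.size + 1
  | all _ A => A.size + 1
  | ex _ A => A.size + 1

/-- Strip the maximal prefix of universal quantifiers. -/
def strip : Fml → List ℕ × Fml
  | all x A => (x :: (strip A).1, (strip A).2)
  | A => ([], A)

end Fml

/-- `x` occurs free in a formula. -/
def FreeIn (x : ℕ) : Fml → Prop
  | Fml.bot => False
  | Fml.top => False
  | Fml.pred _ _ ts => ∃ i, ts i = x
  | Fml.and A B => FreeIn x A ∨ FreeIn x B
  | Fml.or A B => FreeIn x A ∨ FreeIn x B
  | Fml.imp A B => FreeIn x A ∨ FreeIn x B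
  | Fml.all z A => x ≠ z ∧ FreeIn x A
  | Fml.ex z A => x ≠ z ∧ FreeIn x A

/-- A sentence: a formula with no free variables. -/
def Fml.Closed (A : Fml) : Prop := ∀ x, ¬ FreeIn x A

/-- An evaluation: each `n`-ary predicate symbol gets a generalized predicate,
i.e. a map from `n`-tuples to sets of natural numbers. -/
abbrev Eval := ℕ → (n : ℕ) → (Fin n → ℕ) → Set ℕ

/-- Update an environment at a list of variables by a list of values
(later, i.e. inner, updates override earlier ones). -/
def updEnv : (ℕ → ℕ) → List ℕ → List ℕ → (ℕ → ℕ)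
  | ρ, x :: xs, a :: as => updEnv (Function.update ρ x a) xs as
  | ρ, _, _ => ρ

/-- Fueled definition of `V`-realizability of a formula over an evaluation `f`
with domain `M`, relative to an environment `ρ` assigning elements of `M`
to the variables. -/
def RzF (V : Numbering) (M : Set ℕ) (f : Eval) : ℕ → Fml → (ℕ → ℕ) → ℕ → Prop
  | 0, _, _, _ => False
  | _ + 1, Fml.bot, _, _ => False
  | _ + 1, Fml.top, _, _ => True
  | _ + 1, Fml.pred P n ts, ρ, e => e ∈ f P n fun i => ρ (ts i)
  | k + 1, Fml.and A B, ρ, e => RzF V M f k A ρ (V.p1 e) ∧ RzF V M f k B ρ (V.p2 e)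
  | k + 1, Fml.or A B, ρ, e =>
      (V.p1 e = 0 ∧ RzF V M f k A ρ (V.p2 e)) ∨ (V.p1 e = 1 ∧ RzF V M f k B ρ (V.p2 e))
  | k + 1, Fml.imp A B, ρ, e =>
      e ∈ V.Idx 1 ∧ ∀ s : ℕ, RzF V M f k A ρ s →
        ∃ v, V.φ 1 e ![s] = Part.some v ∧ RzF V M f k B ρ v
  | k + 1, Fml.ex x A, ρ, e =>
      V.p1 e ∈ M ∧ RzF V M f k A (Function.update ρ x (V.p1 e)) (V.p2 e)
  | k + 1, Fml.all x A, ρ, e =>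
      match Fml.strip A with
      | (ys, Fml.imp B C) =>
          e ∈ V.Idx ((x :: ys).length + 1) ∧
            ∀ a : Fin (x :: ys).length → ℕ, (∀ i, a i ∈ M) → ∀ s : ℕ,
              RzF V M f k B (updEnv ρ (x :: ys) (List.ofFn a)) s →
                ∃ v, V.φ ((x :: ys).length + 1) e (Fin.snoc a s) = Part.some v ∧
                  RzF V M f k C (updEnv ρ (x :: ys) (List.ofFn a)) v
      | (ys, D) =>
          e ∈ V.Idx ((x :: ys).length + 1) ∧
            ∀ a : Fin (x :: ys).length → ℕ, (∀ i, a i ∈ M) → ∀ s : ℕ,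
              ∃ v, V.φ ((x :: ys).length + 1) e (Fin.snoc a s) = Part.some v ∧
                RzF V M f k D (updEnv ρ (x :: ys) (List.ofFn a)) v

/-- `e` `V`-realizes the formula `A` on the evaluation `f` with domain `M`,
relative to the environment `ρ`. -/
def Rz (V : Numbering) (M : Set ℕ) (f : Eval) (A : Fml) (ρ : ℕ → ℕ) (e : ℕ) : Prop :=
  RzF V M f (A.size + 1) A ρ e

end GenReal

namespace GenReal


lemma size_pos (A : Fml) : 1 ≤ A.size := by
  cases A <;> simp [Fml.size]

lemma strip_size (A : Fml) : (Fml.strip A).2.size ≤ A.size := by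
  induction A <;> simp_all [Fml.strip, Fml.size] <;> omega

lemma rzf_step (V : Numbering) (M : Set ℕ) (f : Eval) :
    ∀ (n : ℕ) (A : Fml), A.size ≤ n → ∀ k, A.size ≤ k → ∀ ρ e,
      (RzF V M f (k + 1) A ρ e ↔ RzF V M f k A ρ e) := by
  intro n
  induction n with
  | zero => intro A hA; have := size_pos A; omega
  | succ n ih =>
    intro A hA k hk ρ e
    have hk1 := size_pos A
    obtain ⟨m, rfl⟩ : ∃ m, k = m + 1 := ⟨k - 1, by omega⟩
    cases A with
    | bot => simp [RzF]
    | top => simp [RzF]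
    | pred P nn ts => simp [RzF]
    | and A B =>
      have hA1 := size_pos A; have hB1 := size_pos B
      simp only [Fml.size] at hA hk
      simp only [RzF, ih A (by omega) m (by omega), ih B (by omega) m (by omega)]
    | or A B =>
      have hA1 := size_pos A; have hB1 := size_pos B
      simp only [Fml.size] at hA hk
      simp only [RzF, ih A (by omega) m (by omega), ih B (by omega) m (by omega)]
    | imp A B =>
      have hA1 := size_pos A; have hB1 := size_pos B
      simp only [Fml.size] at hA hk
      simp only [RzF, ih A (by omega) m (by omega), ih B (by omega) m (by omega)]
    | ex x A =>
      simp only [Fml.size] at hA hk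
      simp only [RzF, ih A (by omega) m (by omega)]
    | all x A =>
      simp only [Fml.size] at hA hk
      have hst := strip_size A
      simp only [RzF]
      rcases hsD : Fml.strip A with ⟨ys, D⟩
      rw [hsD] at hst
      cases D <;>
        simp only [hsD] <;>
        first
          | (rename_i B C;
             have hB1 := size_pos B; have hC1 := size_pos C;
             simp only [Fml.size] at hst;
             simp only [ih B (by omega) m (by omega), ih C (by omega) m (by omega)])
          | simp only [ih _ (le_trans hst (by omega)) m (le_trans hst (by omega))]
/-- over an intuitionistic computability model, the axiom K is
uniformly realizable: there is a `V`-function `s` with `s(a) ∈ I₁` and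
`φ_{s(a)}(y) ≃ a` for all `a`, and an index `e ∈ I₁` of `s` realizing
`A → (B → A)` for all sentences `A`, `B`. -/
theorem stmt6 (V : Numbering) (hV : V.Intu) (M : Set ℕ) (hM : M.Nonempty) (f : Eval) :
    ∃ s : PFn 1, V.IsV 1 s ∧
      (∀ a : ℕ, ∃ w, s ![a] = Part.some w ∧ w ∈ V.Idx 1 ∧
        ∀ y : ℕ, V.φ 1 w ![y] = Part.some a) ∧
      ∃ e ∈ V.Idx 1, (∀ x : Fin 1 → ℕ, V.φ 1 e x = s x) ∧
        ∀ A B : Fml, A.Closed → B.Closed → ∀ ρ : ℕ → ℕ, (∀ x, ρ x ∈ M) →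
          Rz V M f (A.imp (B.imp A)) ρ e := by
  obtain ⟨⟨hBF, hCm, hCn, hCs⟩, hU⟩ := hV
  obtain ⟨s₀, hs₀V, hs₀⟩ := hCn
  obtain ⟨e₀, he₀I, he₀φ⟩ := hs₀V
  obtain ⟨s₂, hs₂V, hs₂⟩ := hCs 0
  obtain ⟨e₂, he₂I, he₂φ⟩ := hs₂V
  obtain ⟨sc, hscV, hsc⟩ := hCm 2 (fun _ => 1)
  obtain ⟨v, hv1, hv2', hv3'⟩ := hsc e₂ he₂I (fun _ => e₀) (fun _ => he₀I)
  have hv2 : v ∈ V.Idx 1 := hv2'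
  have hv3 : ∀ x : Fin 1 → ℕ, V.φ 1 v x =
      (vecPart fun _ : Fin 2 =>
        V.φ 1 e₀ fun j => x (Fin.castLE (by omega) j)).bind (V.φ 2 e₂) := hv3' 
  -- key computation: φ 1 v ![a] = s₂ applied to doubled constant index of a
  have key : ∀ a : ℕ, ∃ w, V.φ 1 v ![a] = Part.some w ∧ w ∈ V.Idx 1 ∧
      ∀ y : ℕ, V.φ 1 w ![y] = Part.some a := by
    intro a
    obtain ⟨ka, hka1, hka2, hka3⟩ := hs₀ a
    obtain ⟨w, hw1, hw2, hw3⟩ := hs₂ ka hka2 ka hka2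
    refine ⟨w, ?_, hw2, ?_⟩
    · have hfa : (fun _ : Fin 1 => a) = ![a] := by funext j; simp
      have hx : (V.φ 1 e₀ fun _ : Fin 1 => a) = Part.some ka := by
        rw [he₀φ, hfa]; exact hka1
      have h2 : (vecPart fun _ : Fin 2 =>
          V.φ 1 e₀ fun j => (![a] : Fin 1 → ℕ) (Fin.castLE (by omega) j)) =
          Part.some (fun _ : Fin 2 => ka) := by
        apply Part.ext'
        · simp [vecPart, hx]
        · intro h h'
          funext i
          simp [vecPart, hx]
      calc V.φ 1 v ![a]
          = (vecPart fun _ : Fin 2 =>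
              V.φ 1 e₀ fun j => (![a] : Fin 1 → ℕ) (Fin.castLE (by omega) j)).bind
                (V.φ 2 e₂) := by rw [hv3]
        _ = (V.φ 2 e₂) (fun _ : Fin 2 => ka) := by rw [h2, Part.bind_some]
        _ = s₂ ![ka, ka] := by
              rw [he₂φ]; congr 1; funext i; fin_cases i <;> rfl
        _ = Part.some w := hw1
    · intro y
      rw [hw3 ![y]]
      split <;> exact hka3 _
  refine ⟨V.φ 1 v, ⟨v, hv2, fun _ => rfl⟩, key, v, hv2, fun _ => rfl, ?_⟩
  intro A B _ _ ρ _
  unfold Rz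
  simp only [Fml.size]
  refine ⟨hv2, fun t ht => ?_⟩
  obtain ⟨w, hw1, hw2, hw3⟩ := key t
  refine ⟨w, hw1, hw2, fun u _ => ⟨t, hw3 u, ?_⟩⟩
  exact (rzf_step V M f A.size A le_rfl _ (by omega) ρ t).mp ht


end GenReal
end

section
/- Let V be an intuitionistic computability model. For every formula A(y,z̄) not of the form B→C or ∀x B, there exist unary V-functions g and h such that for every evaluation f with domain M, all b̄ ∈ M, and every natural number e: (a) if e realizes ∀y A(y,b̄) (i.e., e realizes ∀y(⊤→A(y,b̄))) then g(e) is defined, g(e) ∈ I₁, and for every a ∈ M, φ_{g(e)}(a) is defined and realizes A(a,b̄); (b) if e ∈ I₁ and φ_e(a) is defined and realizes A(a,b̄) for every a ∈ M, then h(e) is defined and realizes ∀y A(y,b̄). -/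
namespace GenReal


private lemma fin1_app {α : Type*} (x : Fin 1 → α) (j : Fin 1) : x j = x 0 := by
  rw [Subsingleton.elim j 0]

private lemma vecPart_eq_some {n : ℕ} {f : Fin n → Part ℕ} {c : Fin n → ℕ}
    (h : ∀ i, f i = Part.some (c i)) : vecPart f = Part.some c := by
  have hd : ∀ i, (f i).Dom := fun i => by rw [h i]; trivial
  refine Part.ext' (iff_of_true hd trivial) fun h1 h2 => funext fun i => ?_
  exact Part.get_eq_of_mem (by rw [h i]; exact Part.mem_some _) _

private lemma snoc_pair (a s : ℕ) : (Fin.snoc ![a] s : Fin 2 → ℕ) = ![a, s] := by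
  funext i; fin_cases i <;> simp [Fin.snoc]

private lemma snoc_zero (a : Fin 1 → ℕ) (s : ℕ) : (Fin.snoc a s : Fin 2 → ℕ) 0 = a 0 := by
  simp [Fin.snoc]

private lemma rz_all (V : Numbering) (M : Set ℕ) (f : Eval) {A : Fml}
    (hImp : ∀ B C : Fml, A ≠ B.imp C) (hAll : ∀ (x : ℕ) (B : Fml), A ≠ Fml.all x B)
    (y : ℕ) (ρ : ℕ → ℕ) (e : ℕ) :
    Rz V M f (Fml.all y A) ρ e ↔
      (e ∈ V.Idx 2 ∧ ∀ a : Fin 1 → ℕ, (∀ i, a i ∈ M) → ∀ s : ℕ,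
        ∃ v, V.φ 2 e (Fin.snoc a s) = Part.some v ∧
          Rz V M f A (Function.update ρ y (a 0)) v) := by
  cases A
  case imp B C => exact absurd rfl (hImp B C)
  case all x B => exact absurd rfl (hAll x B)
  all_goals exact Iff.rfl

/-- Lemma 2, part 2: the translation between the `∀`-clause and the
pointwise clause `r'`, for formulas `A` not of the form `B → C` or `∀x B`. -/
theorem stmt11 (V : Numbering) (hV : V.Intu) (A : Fml) (y : ℕ)
    (hImp : ∀ B C : Fml, A ≠ B.imp C) (hAll : ∀ (x : ℕ) (B : Fml), A ≠ Fml.all x B) :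
    ∃ g h : PFn 1, V.IsV 1 g ∧ V.IsV 1 h ∧
      ∀ (M : Set ℕ), M.Nonempty → ∀ (f : Eval) (ρ : ℕ → ℕ), (∀ x, ρ x ∈ M) →
        ∀ e : ℕ,
          (Rz V M f (Fml.all y A) ρ e →
            ∃ gv, g ![e] = Part.some gv ∧ gv ∈ V.Idx 1 ∧
              ∀ a ∈ M, ∃ v, V.φ 1 gv ![a] = Part.some v ∧
                Rz V M f A (Function.update ρ y a) v) ∧
          ((e ∈ V.Idx 1 ∧ ∀ a ∈ M, ∃ v, V.φ 1 e ![a] = Part.some v ∧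
              Rz V M f A (Function.update ρ y a) v) →
            ∃ hv, h ![e] = Part.some hv ∧ Rz V M f (Fml.all y A) ρ hv) := by
  obtain ⟨⟨hBF, hCm, hCn, hCs⟩, -⟩ := hV
  obtain ⟨hproj, -, -, -⟩ := hBF
  obtain ⟨pid, pidIdx, pidSpec⟩ := hproj 1 0
  obtain ⟨pr0, pr0Idx, pr0Spec⟩ := hproj 2 0
  obtain ⟨sc, -, scSpec⟩ := hCn
  obtain ⟨v0, -, v0Idx, v0Spec⟩ := scSpec 0
  obtain ⟨cs0, -, cs0Spec⟩ := hCs 0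
  have constU : ∀ k : ℕ, ∃ w ∈ V.Idx 1, ∀ x : Fin 1 → ℕ, V.φ 1 w x = Part.some k := by
    intro k
    obtain ⟨vk, -, vkIdx, vkSpec⟩ := scSpec k
    obtain ⟨w, -, wIdx, wSpec⟩ := cs0Spec vk vkIdx vk vkIdx
    refine ⟨w, wIdx, fun x => (wSpec x).trans ?_⟩
    split <;> exact vkSpec _
  obtain ⟨wid, widIdx, widSpec⟩ := constU pid
  obtain ⟨wpr0, wpr0Idx, wpr0Spec⟩ := constU pr0
  obtain ⟨wv0, wv0Idx, wv0Spec⟩ := constU v0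
  obtain ⟨s2, ⟨e2, e2Idx, e2Spec⟩, s2Spec⟩ := hCm 2 ![1, 0]
  obtain ⟨sb, ⟨eb, ebIdx, ebSpec⟩, sbSpec⟩ := hCm 1 ![2]
  obtain ⟨s3, -, s3Spec⟩ := hCm 3 ![1, 1, 1]
  obtain ⟨s4, -, s4Spec⟩ := hCm 2 ![1, 1]
  obtain ⟨vg, -, vgIdx, vgSpec⟩ := s3Spec e2 e2Idx ![pid, wid, wv0]
      (by intro i; fin_cases i; exacts [pidIdx, widIdx, wv0Idx])
  obtain ⟨vh, -, vhIdx, vhSpec⟩ := s4Spec eb ebIdx ![pid, wpr0]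
      (by intro i; fin_cases i; exacts [pidIdx, wpr0Idx])
  have hg : ∀ x : Fin 1 → ℕ, V.φ 1 vg x = s2 ![x 0, pid, v0] := by
    intro x
    refine (vgSpec x).trans ?_
    rw [vecPart_eq_some (c := ![x 0, pid, v0]) ?hf, Part.bind_some]
    · exact e2Spec _
    case hf =>
      intro i; fin_cases i
      · exact (pidSpec _).trans (congrArg Part.some (fin1_app x _))
      · exact widSpec _
      · exact wv0Spec _
  have hh : ∀ x : Fin 1 → ℕ, V.φ 1 vh x = sb ![x 0, pr0] := by
    intro x
    refine (vhSpec x).trans ?_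
    rw [vecPart_eq_some (c := ![x 0, pr0]) ?hf, Part.bind_some]
    · exact ebSpec _
    case hf =>
      intro i; fin_cases i
      · exact (pidSpec _).trans (congrArg Part.some (fin1_app x _))
      · exact wpr0Spec _
  refine ⟨V.φ 1 vg, V.φ 1 vh, ⟨vg, vgIdx, fun _ => rfl⟩, ⟨vh, vhIdx, fun _ => rfl⟩, ?_⟩
  intro M hM f ρ hρ e
  constructor
  · intro he
    rw [rz_all V M f hImp hAll] at he
    obtain ⟨heIdx, heAll⟩ := he
    obtain ⟨gv, hgv, gvIdx, gvSpec⟩ := s2Spec e heIdx ![pid, v0]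
        (by intro i; fin_cases i; exacts [pidIdx, v0Idx])
    refine ⟨gv, (hg ![e]).trans hgv, gvIdx, ?_⟩
    intro a ha
    obtain ⟨v, hv, hrz⟩ := heAll ![a] (fun i => Set.mem_of_eq_of_mem (fin1_app ![a] i) ha) 0
    refine ⟨v, ?_, hrz⟩
    refine (gvSpec ![a]).trans ?_
    rw [vecPart_eq_some (c := ![a, 0]) ?hf, Part.bind_some, snoc_pair] at *
    · exact hv
    case hf =>
      intro i; fin_cases i
      · exact (pidSpec _).trans (congrArg Part.some (fin1_app _ _))
      · exact v0Spec _
  · rintro ⟨heIdx, hept⟩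
    obtain ⟨hv, hsb, hvIdx, hvSpec⟩ := sbSpec e heIdx ![pr0]
        (by intro i; fin_cases i; exact pr0Idx)
    refine ⟨hv, (hh ![e]).trans hsb, ?_⟩
    rw [rz_all V M f hImp hAll]
    refine ⟨hvIdx, fun a ha s => ?_⟩
    obtain ⟨v, hev, hrz⟩ := hept (a 0) (ha 0)
    refine ⟨v, ?_, hrz⟩
    refine (hvSpec (Fin.snoc a s)).trans ?_
    rw [vecPart_eq_some (c := ![a 0]) ?hf, Part.bind_some]
    · exact hev
    case hf =>
      intro i; fin_cases i
      exact (pr0Spec _).trans (congrArg Part.some (snoc_zero a s))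

end GenReal
end

section
/- Let V be a basic computability model. If the formula ∀x(Q(x) → ∀y(R(x,y) → ∃z P(x,y,z))) → ∀y∀x(Q(x) ∧ R(x,y) → ∃z P(x,y,z)) is weakly V-realizable in the domain ℕ, then there exists an overuniversal V-function for the set of all unary V-functions: a binary V-function u such that u(a,b) is defined and u(a,b) = φ_a(b) for all a ∈ I₁ and b with φ_a(b) defined. -/
namespace GenReal

namespace Fml

/-- Substitution `A[t/y]` of the term (variable) `t` for the free occurrences of `y`. -/
def subst : Fml → ℕ → ℕ → Fml
  | bot, _, _ => bot
  | top, _, _ => top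
  | pred P n ts, y, t => pred P n fun i => if ts i = y then t else ts i
  | and A B, y, t => and (A.subst y t) (B.subst y t)
  | or A B, y, t => or (A.subst y t) (B.subst y t)
  | imp A B, y, t => imp (A.subst y t) (B.subst y t)
  | all z A, y, t => if z = y then all z A else all z (A.subst y t)
  | ex z A, y, t => if z = y then ex z A else ex z (A.subst y t)

end Fml

/-- The term (variable) `t` is free for `y` in the formula. -/
def FreeFor (t y : ℕ) : Fml → Prop
  | Fml.and A B => FreeFor t y A ∧ FreeFor t y B
  | Fml.or A B => FreeFor t y A ∧ FreeFor t y B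
  | Fml.imp A B => FreeFor t y A ∧ FreeFor t y B
  | Fml.all z A => (¬ FreeIn y (Fml.all z A)) ∨ (z ≠ t ∧ FreeFor t y A)
  | Fml.ex z A => (¬ FreeIn y (Fml.ex z A)) ∨ (z ≠ t ∧ FreeFor t y A)
  | _ => True

/-- Derivability in Intuitionistic Predicate Calculus (Hilbert-style, axioms A1–A14,
modus ponens and generalization). -/
inductive Deriv : Fml → Prop
  | a1 : Deriv Fml.top
  | a2 (A B : Fml) : Deriv (A.imp (B.imp A))
  | a3 (A B C : Fml) : Deriv ((A.imp (B.imp C)).imp ((A.imp B).imp (A.imp C)))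
  | a4 (A B : Fml) : Deriv (A.imp (B.imp (A.and B)))
  | a5 (A B : Fml) : Deriv ((A.and B).imp A)
  | a6 (A B : Fml) : Deriv ((A.and B).imp B)
  | a7 (A B C : Fml) : Deriv ((A.imp C).imp ((B.imp C).imp ((A.or B).imp C)))
  | a8 (A B : Fml) : Deriv (A.imp (A.or B))
  | a9 (A B : Fml) : Deriv (B.imp (A.or B))
  | a10 (A : Fml) : Deriv (Fml.bot.imp A)
  | a11 (A : Fml) (y t : ℕ) : FreeFor t y A → Deriv ((Fml.all y A).imp (A.subst y t))
  | a12 (A : Fml) (y t : ℕ) : FreeFor t y A → Deriv ((A.subst y t).imp (Fml.ex y A))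
  | a13 (A B : Fml) (x : ℕ) : ¬ FreeIn x B →
      Deriv ((Fml.all x (B.imp A)).imp (B.imp (Fml.all x A)))
  | a14 (A B : Fml) (x : ℕ) : ¬ FreeIn x B →
      Deriv ((Fml.all x (A.imp B)).imp ((Fml.ex x A).imp B))
  | mp (A B : Fml) : Deriv (A.imp B) → Deriv A → Deriv B
  | gen (A : Fml) (y : ℕ) : Deriv A → Deriv (Fml.all y A)

/-- The formula of condition (iii) of the main theorem:
`∀x(Q(x) → ∀y(R(x,y) → ∃z P(x,y,z))) → ∀y∀x(Q(x) ∧ R(x,y) → ∃z P(x,y,z))`,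
with `x`, `y`, `z` the variables `0`, `1`, `2` and `Q`, `R`, `P` the predicate
symbols `0`, `1`, `2` of arities `1`, `2`, `3`. -/
def keyFml : Fml :=
  Fml.imp
    (Fml.all 0 (Fml.imp (Fml.pred 0 1 ![0])
      (Fml.all 1 (Fml.imp (Fml.pred 1 2 ![0, 1]) (Fml.ex 2 (Fml.pred 2 3 ![0, 1, 2]))))))
    (Fml.all 1 (Fml.all 0 (Fml.imp ((Fml.pred 0 1 ![0]).and (Fml.pred 1 2 ![0, 1]))
      (Fml.ex 2 (Fml.pred 2 3 ![0, 1, 2])))))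

/-- A sentence is weakly `V`-realizable in the domain `ℕ` if for every
`ℕ`-evaluation some number realizes it. -/
def WeakRealizableNat (V : Numbering) (A : Fml) : Prop :=
  ∀ f : Eval, ∃ e : ℕ, Rz V Set.univ f A (fun _ => 0) e

/-- A sentence is absolutely `V`-realizable over all domains if a single number
realizes it on every evaluation over every nonempty domain. -/
def AbsRealizable (V : Numbering) (A : Fml) : Prop :=
  ∃ e : ℕ, ∀ (M : Set ℕ), M.Nonempty → ∀ (f : Eval) (ρ : ℕ → ℕ),
    (∀ x, ρ x ∈ M) → Rz V M f A ρ e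

end GenReal

namespace GenReal

section Helpers

variable (V : Numbering)

lemma vecPart_some {n : ℕ} (g : Fin n → ℕ) :
    vecPart (fun i => Part.some (g i)) = Part.some g := by
  refine Part.ext' ?_ ?_
  · simp [vecPart]
  · intro h1 h2; funext i; rfl

lemma vecPart_bind_eq {n : ℕ} (F : Fin n → Part ℕ) (g : PFn n) (r : Fin n → ℕ)
    (hF : ∀ i, F i = Part.some (r i)) : (vecPart F).bind g = g r := by
  have : F = fun i => Part.some (r i) := funext hF
  rw [this, vecPart_some, Part.bind_some]

lemma phi_cast {K N : ℕ} (hK : K = N) (v : ℕ) (x : Fin N → ℕ) :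
    V.φ N v x = V.φ K v (fun j => x (Fin.cast hK j)) := by
  subst hK; simp [Fin.cast]

lemma mem_Idx_cast {K N : ℕ} (hK : K = N) {v : ℕ} (h : v ∈ V.Idx K) : v ∈ V.Idx N := hK ▸ h

lemma cm_uniform (hcm : V.Cm) {n N : ℕ} (hn : 0 < n) :
    ∃ s : PFn (n+1), V.IsV (n+1) s ∧
    ∀ e ∈ V.Idx n, ∀ es : Fin n → ℕ, (∀ i, es i ∈ V.Idx N) →
      ∃ v, s (Fin.cons e es) = Part.some v ∧ v ∈ V.Idx N ∧
        ∀ x : Fin N → ℕ,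
          V.φ N v x = (vecPart fun i => V.φ N (es i) x).bind (V.φ n e) := by
  obtain ⟨s, hsV, hs⟩ := hcm n (fun _ => N)
  haveI : Nonempty (Fin n) := ⟨⟨0, hn⟩⟩
  have hK : (Finset.univ.sup fun _ : Fin n => N) = N := Finset.sup_const Finset.univ_nonempty N
  refine ⟨s, hsV, fun e he es hes => ?_⟩
  obtain ⟨v, hv1, hv2, hv3⟩ := hs e he es hes
  refine ⟨v, hv1, mem_Idx_cast V hK hv2, fun x => ?_⟩
  rw [phi_cast V hK, hv3]
  exact rfl

lemma isV_comp (hcm : V.Cm) {n : ℕ} (hn : 0 < n) (g : PFn n) (hg : V.IsV n g)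
    (H : Fin n → PFn 2) (hH : ∀ i, V.IsV 2 (H i)) :
    V.IsV 2 (fun x => (vecPart fun i => H i x).bind g) := by
  obtain ⟨s, _, hs⟩ := cm_uniform V hcm (N := 2) hn
  obtain ⟨e, he, hge⟩ := hg
  choose es hes1 hes2 using hH
  obtain ⟨v, _, hv2, hv3⟩ := hs e he es hes1
  refine ⟨v, hv2, fun x => ?_⟩
  rw [hv3]
  congr 1
  · congr 1; funext i; rw [hes2 i]
  · funext y; rw [hge]

lemma S1spec (hcm : V.Cm) :
    ∃ S1 : PFn 2, V.IsV 2 S1 ∧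
    ∀ e ∈ V.Idx 1, ∀ h₀ ∈ V.Idx 2,
      ∃ w, S1 ![e, h₀] = Part.some w ∧ w ∈ V.Idx 2 ∧
        ∀ (x : Fin 2 → ℕ) (r : ℕ), V.φ 2 h₀ x = Part.some r →
          V.φ 2 w x = V.φ 1 e ![r] := by
  obtain ⟨s, hsV, hs⟩ := hcm 1 ![2]
  have hK : (Finset.univ.sup ![2]) = 2 := by decide
  refine ⟨s, hsV, fun e he h₀ hh₀ => ?_⟩
  obtain ⟨w, hw1, hw2, hw3⟩ := hs e he ![h₀] (by intro i; fin_cases i; exact hh₀)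
  refine ⟨w, hw1, mem_Idx_cast V hK hw2, fun x r hr => ?_⟩
  rw [phi_cast V hK, hw3]
  refine vecPart_bind_eq _ _ ![r] ?_
  intro i
  fin_cases i
  exact hr

lemma S2spec (hcm : V.Cm) :
    ∃ S2 : PFn 3, V.IsV 3 S2 ∧
    ∀ g ∈ V.Idx 2, ∀ h₀ ∈ V.Idx 2, ∀ h₁ ∈ V.Idx 0,
      ∃ v, S2 ![g, h₀, h₁] = Part.some v ∧ v ∈ V.Idx 2 ∧
        ∀ (x : Fin 2 → ℕ) (r k : ℕ), V.φ 2 h₀ x = Part.some r →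
          (∀ y : Fin 0 → ℕ, V.φ 0 h₁ y = Part.some k) →
          V.φ 2 v x = V.φ 2 g ![r, k] := by
  obtain ⟨s, hsV, hs⟩ := hcm 2 ![2, 0]
  have hK : (Finset.univ.sup ![2, 0]) = 2 := by decide
  refine ⟨s, hsV, fun g hg h₀ hh₀ h₁ hh₁ => ?_⟩
  obtain ⟨v, hv1, hv2, hv3⟩ := hs g hg ![h₀, h₁] (by intro i; fin_cases i; exacts [hh₀, hh₁])
  refine ⟨v, hv1, mem_Idx_cast V hK hv2, fun x r k hr hk => ?_⟩
  rw [phi_cast V hK, hv3]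
  refine vecPart_bind_eq _ _ ![r, k] ?_
  intro i
  fin_cases i
  · exact hr
  · exact hk _

lemma isV_const2 (hproj : ∀ (n : ℕ) (i : Fin n), V.IsV n fun x => Part.some (x i))
    (hcm : V.Cm) (hcn : V.Cn) (k : ℕ) : V.IsV 2 (fun _ => Part.some k) := by
  obtain ⟨S2, _, hS2⟩ := S2spec V hcm
  obtain ⟨p0, hp0I, hp0⟩ := hproj 2 0
  obtain ⟨p1, hp1I, hp1⟩ := hproj 2 1
  obtain ⟨sc, _, hsc⟩ := hcn
  obtain ⟨k0, _, hk0I, hk0⟩ := hsc k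
  obtain ⟨v, _, hvI, hvfn⟩ := hS2 p1 hp1I p0 hp0I k0 hk0I
  refine ⟨v, hvI, fun x => ?_⟩
  rw [hvfn x (x 0) k (hp0 x) hk0, hp1]
  simp

lemma snoc1_eq (a : Fin 1 → ℕ) (t : ℕ) : (Fin.snoc a t : Fin 2 → ℕ) = ![a 0, t] := by
  funext i; fin_cases i <;> simp [Fin.snoc] <;> rfl

lemma snoc2_eq (a : Fin 2 → ℕ) (t : ℕ) : (Fin.snoc a t : Fin 3 → ℕ) = ![a 0, a 1, t] := by
  funext i; fin_cases i <;> simp [Fin.snoc] <;> rfl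

lemma fin1_eq (a : Fin 1 → ℕ) : a = ![a 0] := by
  funext i; fin_cases i; rfl

/-- The realizer of the antecedent: a binary `V`-function index `sI` computing,
for each `a ∈ Idx 1`, an index `va` of the binary function `(b,t) ↦ c (φ 1 a ![b]) 0`. -/
lemma exists_sI (hB : V.Basic) :
    ∃ sI ∈ V.Idx 2, ∀ a ∈ V.Idx 1, ∀ t : ℕ,
      ∃ va, V.φ 2 sI ![a, t] = Part.some va ∧ va ∈ V.Idx 2 ∧
        ∀ b t' r : ℕ, V.φ 1 a ![b] = Part.some r →
          V.φ 2 va ![b, t'] = Part.some (V.c r 0) := by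
  obtain ⟨⟨hproj, hcfn, hp1f, hp2f⟩, hcm, hcn, hcs⟩ := hB
  obtain ⟨cI, hcII, hcIfn⟩ := hcfn
  obtain ⟨π20, hπ20I, hπ20fn⟩ := hproj 2 0
  obtain ⟨sc, _, hsc⟩ := id hcn
  obtain ⟨k0, _, hk0I, hk0⟩ := hsc 0
  obtain ⟨S1, hS1V, hS1⟩ := S1spec V hcm
  obtain ⟨S2, hS2V, hS2⟩ := S2spec V hcm
  obtain ⟨s1I, hs1I, hs1fn⟩ := hS1V
  obtain ⟨s2I, hs2I, hs2fn⟩ := hS2V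
  -- the middle component: x ↦ S1 (x 0, π20)
  have hH1V : V.IsV 2 (fun x =>
      (vecPart fun i => (![fun x' : Fin 2 → ℕ => Part.some (x' 0),
        fun _ => Part.some π20] : Fin 2 → PFn 2) i x).bind (V.φ 2 s1I)) := by
    refine isV_comp V hcm (by norm_num) _ ⟨s1I, hs1I, fun _ => rfl⟩ _ ?_
    intro i
    fin_cases i
    · exact hproj 2 0
    · exact isV_const2 V hproj hcm hcn π20
  obtain ⟨h1I, hh1I, hh1fn⟩ := hH1V
  have hSV : V.IsV 2 (fun x =>
      (vecPart fun i => (![fun _ => Part.some cI, V.φ 2 h1I,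
        fun _ => Part.some k0] : Fin 3 → PFn 2) i x).bind (V.φ 3 s2I)) := by
    refine isV_comp V hcm (by norm_num) _ ⟨s2I, hs2I, fun _ => rfl⟩ _ ?_
    intro i
    fin_cases i
    · exact isV_const2 V hproj hcm hcn cI
    · exact ⟨h1I, hh1I, fun _ => rfl⟩
    · exact isV_const2 V hproj hcm hcn k0
  obtain ⟨sI, hsII, hsfn⟩ := hSV
  refine ⟨sI, hsII, fun a ha t => ?_⟩
  obtain ⟨w1, hw1eq, hw1I, hw1fn⟩ := hS1 a ha π20 hπ20I
  obtain ⟨va, hvaeq, hvaI, hvafn⟩ := hS2 cI hcII w1 hw1I k0 hk0I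
  have hmid : V.φ 2 h1I ![a, t] = Part.some w1 := by
    rw [hh1fn]
    refine (vecPart_bind_eq _ _ ![a, π20] ?_).trans ?_
    · intro i; fin_cases i <;> simp
    · rw [hs1fn]; exact hw1eq
  refine ⟨va, ?_, hvaI, ?_⟩
  · rw [hsfn]
    refine (vecPart_bind_eq _ _ ![cI, w1, k0] ?_).trans ?_
    · intro i
      fin_cases i
      · simp
      · simpa using hmid
      · simp
    · rw [hs2fn]; exact hvaeq
  · intro b t' r hr
    have hw : V.φ 2 w1 ![b, t'] = Part.some r := by
      rw [hw1fn ![b, t'] b (by rw [hπ20fn]; simp)]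
      simpa using hr
    rw [hvafn ![b, t'] r 0 hw hk0, hcIfn]
    simp

end Helpers

/-- The key evaluation. -/
def keyEval (V : Numbering) : Eval := fun P n =>
  match P, n with
  | 0, 1 => fun args => {_m | args 0 ∈ V.Idx 1}
  | 1, 2 => fun args => {_m | args 0 ∈ V.Idx 1 ∧ (V.φ 1 (args 0) ![args 1]).Dom}
  | 2, 3 => fun args => {_m | args 0 ∈ V.Idx 1 ∧ ∃ hd : (V.φ 1 (args 0) ![args 1]).Dom,
      (V.φ 1 (args 0) ![args 1]).get hd = args 2}
  | _, _ => fun _ => ∅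

def fmlA : Fml :=
  Fml.all 0 (Fml.imp (Fml.pred 0 1 ![0])
    (Fml.all 1 (Fml.imp (Fml.pred 1 2 ![0, 1]) (Fml.ex 2 (Fml.pred 2 3 ![0, 1, 2])))))

def fmlB : Fml :=
  Fml.all 1 (Fml.all 0 (Fml.imp ((Fml.pred 0 1 ![0]).and (Fml.pred 1 2 ![0, 1]))
    (Fml.ex 2 (Fml.pred 2 3 ![0, 1, 2]))))

section Unfold

variable (V : Numbering) (M : Set ℕ) (f : Eval) (ρ : ℕ → ℕ) (e : ℕ)

lemma Rz_key_iff : Rz V M f keyFml ρ e ↔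
    (e ∈ V.Idx 1 ∧ ∀ s : ℕ, RzF V M f 17 fmlA ρ s →
      ∃ v, V.φ 1 e ![s] = Part.some v ∧ RzF V M f 17 fmlB ρ v) := Iff.rfl

lemma RzA_iff : RzF V M f 17 fmlA ρ e ↔
    (e ∈ V.Idx 2 ∧
      ∀ a : Fin 1 → ℕ, (∀ i, a i ∈ M) → ∀ s : ℕ,
        (s ∈ f 0 1 fun i => updEnv ρ [0] (List.ofFn a) (![0] i)) →
          ∃ v, V.φ 2 e (Fin.snoc a s) = Part.some v ∧
            (v ∈ V.Idx 2 ∧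
              ∀ b : Fin 1 → ℕ, (∀ i, b i ∈ M) → ∀ t : ℕ,
                (t ∈ f 1 2 fun i => updEnv (updEnv ρ [0] (List.ofFn a)) [1] (List.ofFn b)
                  ((![0,1] : Fin 2 → ℕ) i)) →
                  ∃ w, V.φ 2 v (Fin.snoc b t) = Part.some w ∧
                    (V.p1 w ∈ M ∧ V.p2 w ∈ f 2 3 fun i =>
                      Function.update (updEnv (updEnv ρ [0] (List.ofFn a)) [1] (List.ofFn b)) 2
                        (V.p1 w) ((![0,1,2] : Fin 3 → ℕ) i)))) := Iff.rfl

lemma RzB_iff : RzF V M f 17 fmlB ρ e ↔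
    (e ∈ V.Idx 3 ∧
      ∀ a : Fin 2 → ℕ, (∀ i, a i ∈ M) → ∀ s : ℕ,
        ((V.p1 s ∈ f 0 1 fun i => updEnv ρ [1,0] (List.ofFn a) ((![0] : Fin 1 → ℕ) i)) ∧
         (V.p2 s ∈ f 1 2 fun i => updEnv ρ [1,0] (List.ofFn a) ((![0,1] : Fin 2 → ℕ) i))) →
          ∃ v, V.φ 3 e (Fin.snoc a s) = Part.some v ∧
            (V.p1 v ∈ M ∧ V.p2 v ∈ f 2 3 fun i =>
              Function.update (updEnv ρ [1,0] (List.ofFn a)) 2 (V.p1 v)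
                ((![0,1,2] : Fin 3 → ℕ) i))) := Iff.rfl

end Unfold

/-- if `V` is a basic computability model and the formula
`∀x(Q(x) → ∀y(R(x,y) → ∃z P(x,y,z))) → ∀y∀x(Q(x) ∧ R(x,y) → ∃z P(x,y,z))`
is weakly `V`-realizable in the domain `ℕ`, then there is an overuniversal
`V`-function for the set of all unary `V`-functions. -/

theorem stmt17 (V : Numbering) (hV : V.Basic) (h : WeakRealizableNat V keyFml) :
    ∃ u : PFn 2, V.IsV 2 u ∧ V.Overuniversal 1 u := by
  obtain ⟨sI, hsII, hsI⟩ := exists_sI V hV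
  obtain ⟨e, he⟩ := h (keyEval V)
  obtain ⟨-, himp⟩ := (Rz_key_iff V _ _ _ _).mp he
  -- `sI` realizes the antecedent
  have hA : RzF V Set.univ (keyEval V) 17 fmlA (fun _ => 0) sI := by
    rw [RzA_iff]
    refine ⟨hsII, ?_⟩
    intro a _ t ht
    have ha : a 0 ∈ V.Idx 1 := ht
    obtain ⟨va, hva, hvaI, hvafn⟩ := hsI (a 0) ha t
    refine ⟨va, ?_, hvaI, ?_⟩
    · rw [snoc1_eq]; exact hva
    · intro b _ t' ht'
      obtain ⟨-, hd⟩ := (ht' : _ ∧ _)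
      have hr : V.φ 1 (a 0) ![b 0] = Part.some ((V.φ 1 (a 0) ![b 0]).get hd) :=
        (Part.some_get hd).symm
      refine ⟨V.c ((V.φ 1 (a 0) ![b 0]).get hd) 0, ?_, Set.mem_univ _, ?_⟩
      · rw [snoc1_eq]; exact hvafn (b 0) t' _ hr
      · exact ⟨ha, hd, (V.p1c _ _).symm⟩
  obtain ⟨v, -, hvB⟩ := himp sI hA
  obtain ⟨hvI, hv⟩ := (RzB_iff V _ _ _ _).mp hvB
  -- pieces of Basic
  have hproj := hV.1.1
  have hcm := hV.2.1
  have hcn := hV.2.2.1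
  obtain ⟨p1I, hp1II, hp1fn⟩ := hV.1.2.2.1
  -- inner ternary composition
  have hinner : V.IsV 2 (fun x =>
      (vecPart fun i => (![fun x' : Fin 2 → ℕ => Part.some (x' 1),
        fun x' : Fin 2 → ℕ => Part.some (x' 0),
        fun _ => Part.some 0] : Fin 3 → PFn 2) i x).bind (V.φ 3 v)) := by
    refine isV_comp V hcm (by norm_num) _ ⟨v, hvI, fun _ => rfl⟩ _ ?_
    intro i; fin_cases i
    · exact hproj 2 1
    · exact hproj 2 0
    · exact isV_const2 V hproj hcm hcn 0
  obtain ⟨iI, hiI, hifn⟩ := hinner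
  refine ⟨fun x => (vecPart fun i => (![V.φ 2 iI] : Fin 1 → PFn 2) i x).bind
      (fun y => Part.some (V.p1 (y 0))), ?_, ?_⟩
  · refine isV_comp V hcm (by norm_num) _ ⟨p1I, hp1II, hp1fn⟩ _ ?_
    intro i; fin_cases i
    exact ⟨iI, hiI, fun _ => rfl⟩
  · intro a' ha' arg hdom
    have harg : arg = ![arg 0] := fin1_eq arg
    have hdom' : (V.φ 1 a' ![arg 0]).Dom := by rw [← harg]; exact hdom
    have hr : V.φ 1 a' ![arg 0] = Part.some ((V.φ 1 a' ![arg 0]).get hdom') :=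
      (Part.some_get hdom').symm
    obtain ⟨w, hw, -, hP⟩ := hv ![arg 0, a'] (fun _ => Set.mem_univ _) 0 ⟨ha', ha', hdom'⟩
    have hw' : V.φ 3 v ![arg 0, a', 0] = Part.some w := by
      rw [snoc2_eq] at hw
      simpa using hw
    obtain ⟨-, hd2, hget⟩ := (hP : _ ∧ _)
    have hp1w : V.p1 w = (V.φ 1 a' ![arg 0]).get hdom' := hget.symm
    have hcons : (Fin.cons a' arg : Fin 2 → ℕ) = ![a', arg 0] := by
      funext i; fin_cases i <;> rfl
    refine ((vecPart_bind_eq _ _ ![w] ?_).trans ?_)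
    · intro i; fin_cases i
      show V.φ 2 iI (Fin.cons a' arg) = Part.some w
      rw [hifn]
      refine (vecPart_bind_eq _ _ ![arg 0, a', 0] ?_).trans ?_
      · intro j; fin_cases j <;> simp [hcons]
      · exact hw'
    · show Part.some (V.p1 w) = V.φ 1 a' arg
      rw [hp1w]
      exact hr.symm.trans (congrArg (V.φ 1 a') harg.symm)


end GenReal
end
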